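/- Hamilton-Pontryagin principle for vakonomic Lagrangians: let 𝔏 : ℝ^n × ℝ^n × ℝ^m → ℝ be continuously differentiable and let (q,v,p,λ) : [t₁,t₂] → ℝ^n × ℝ^n × ℝ^n × ℝ^m be a continuously differentiable curve with t₁ < t₂. Then the following are equivalent: (i) for all t ∈ [t₁,t₂], p(t) = ∂𝔏/∂v(q(t),v(t),λ(t)), q'(t) = v(t), p'(t) = ∂𝔏/∂q(q(t),v(t),λ(t)), and ∂𝔏/∂λ(q(t),v(t),λ(t)) = 0; (ii) for every continuously differentiable variation (δq,δv,δp,δλ) : [t₁,t₂] → ℝ^n × ℝ^n × ℝ^n × ℝ^m with δq(t₁) = δq(t₂) = 0, the function s ↦ ∫_{t₁}^{t₂} [ 𝔏(q(t)+s δq(t), v(t)+s δv(t), λ(t)+s δλ(t)) + (p(t)+s δp(t))·(q'(t)+s δq'(t) − v(t) − s δv(t)) ] dt has derivative zero at s = 0. -/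

import Mathlib

/-!
Differentiating under the integral sign, the derivative of the action at `s = 0` is the first
variation `∫ D𝔏(δq, δv, δλ) + δp·(q̇ - v) + p·(δq̇ - δv)`. Integrating `p·δq̇` by parts (`δq`
vanishes at the endpoints) rewrites it as
`∫ (∂𝔏/∂q - ṗ)·δq + (∂𝔏/∂v - p)·δv + (q̇ - v)·δp + ∂𝔏/∂λ·δλ`, and the fundamental lemma of the
calculus of variations, applied to one component of the variation at a time, shows that this
vanishes for every variation iff the four continuous residuals vanish on `[t₁, t₂]`.
-/

open scoped BigOperators

def dot {k : ℕ} (x y : Fin k → ℝ) : ℝ := ∑ i, x i * y i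

open Set MeasureTheory

theorem dot_eq_dotProduct {k : ℕ} (x y : Fin k → ℝ) : dot x y = x ⬝ᵥ y := rfl

@[fun_prop]
theorem Continuous.dot {α : Type*} [TopologicalSpace α] {k : ℕ} {f g : α → Fin k → ℝ}
    (hf : Continuous f) (hg : Continuous g) : Continuous fun a => dot (f a) (g a) :=
  hf.dotProduct hg

theorem HasDerivAt.dot {k : ℕ} {f g : ℝ → Fin k → ℝ} {f' g' : Fin k → ℝ} {s : ℝ}
    (hf : HasDerivAt f f' s) (hg : HasDerivAt g g' s) :
    HasDerivAt (fun t => dot (f t) (g t)) (dot f' (g s) + dot (f s) g') s := by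
  simp only [_root_.dot, ← Finset.sum_add_distrib]
  exact HasDerivAt.fun_sum fun i _ => (hasDerivAt_pi.1 hf i).mul (hasDerivAt_pi.1 hg i)

theorem eqOn_zero_of_forall_integral_mul_eq_zero {t₁ t₂ : ℝ} (ht : t₁ < t₂) {g : ℝ → ℝ}
    (hg : Continuous g)
    (h : ∀ ψ : ℝ → ℝ, ContDiff ℝ 1 ψ → ψ t₁ = 0 → ψ t₂ = 0 → ∫ t in t₁..t₂, g t * ψ t = 0) :
    EqOn g 0 (Icc t₁ t₂) := by
  have hae : ∀ᵐ t, t ∈ Ioo t₁ t₂ → g t = 0 := by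
    refine isOpen_Ioo.ae_eq_zero_of_integral_contDiff_smul_eq_zero
      (hg.locallyIntegrable.locallyIntegrableOn _) fun ψ hψ _ hsupp => ?_
    have hout : ∀ t ∉ Ioo t₁ t₂, ψ t = 0 := fun t ht =>
      image_eq_zero_of_notMem_tsupport fun h => ht (hsupp h)
    have := h ψ (hψ.of_le (by simp)) (hout _ (by simp)) (hout _ (by simp))
    rw [intervalIntegral.integral_of_le ht.le,
      setIntegral_eq_integral_of_forall_compl_eq_zero fun t ht' =>
        by rw [hout t fun h' => ht' (Ioo_subset_Ioc_self h'), mul_zero]] at this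
    simpa [mul_comm] using this
  have hIoo : EqOn g 0 (Ioo t₁ t₂) :=
    Measure.eqOn_open_of_ae_eq ((ae_restrict_iff' measurableSet_Ioo).2 hae) isOpen_Ioo
      hg.continuousOn continuousOn_const
  rw [← closure_Ioo ht.ne]
  exact hIoo.of_subset_closure hg.continuousOn continuousOn_const subset_closure subset_rfl

theorem hasDerivAt_intervalIntegral_of_continuous_deriv {E : Type*} [NormedAddCommGroup E]
    [NormedSpace ℝ E] {F F' : ℝ → ℝ → E} {a b s₀ : ℝ} (hF : ∀ s, Continuous (F s))
    (hF' : Continuous (Function.uncurry F'))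
    (hderiv : ∀ s t, HasDerivAt (fun s => F s t) (F' s t) s) :
    HasDerivAt (fun s => ∫ t in a..b, F s t) (∫ t in a..b, F' s₀ t) s₀ := by
  obtain ⟨M, hM⟩ := ((isCompact_closedBall s₀ 1).prod (isCompact_uIcc (a := a) (b := b)))
    |>.exists_bound_of_continuousOn hF'.continuousOn
  exact (intervalIntegral.hasDerivAt_integral_of_dominated_loc_of_deriv_le
    (Metric.closedBall_mem_nhds s₀ one_pos)
    (.of_forall fun s => (hF s).aestronglyMeasurable) ((hF s₀).intervalIntegrable a b)
    (hF'.comp (Continuous.prodMk_right s₀)).aestronglyMeasurable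
    (.of_forall fun t ht s hs => hM (s, t) ⟨hs, uIoc_subset_uIcc ht⟩)
    intervalIntegrable_const (.of_forall fun t _ s _ => hderiv s t)).2

theorem eqOn_zero_of_forall_integral_dot_eq_zero {k : ℕ} {t₁ t₂ : ℝ} (ht : t₁ < t₂)
    {R : ℝ → Fin k → ℝ} (hR : Continuous R)
    (h : ∀ φ : ℝ → Fin k → ℝ, ContDiff ℝ 1 φ → φ t₁ = 0 → φ t₂ = 0 →
      ∫ t in t₁..t₂, dot (R t) (φ t) = 0) :
    EqOn R 0 (Icc t₁ t₂) := by
  intro t ht'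
  funext i
  refine eqOn_zero_of_forall_integral_mul_eq_zero ht ((continuous_apply i).comp hR)
    (fun ψ hψ h₁ h₂ => ?_) ht'
  simpa [dot_eq_dotProduct] using h (fun t => Pi.single i (ψ t))
    ((ContinuousLinearMap.single ℝ (fun _ => ℝ) i).contDiff.comp hψ) (by simp [h₁]) (by simp [h₂])

theorem forall_eq_zero_iff_forall_integral_dot_eq_zero {a b c d : ℕ} {t₁ t₂ : ℝ} (ht : t₁ < t₂)
    {R₁ : ℝ → Fin a → ℝ} {R₂ : ℝ → Fin b → ℝ} {R₃ : ℝ → Fin c → ℝ} {R₄ : ℝ → Fin d → ℝ}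
    (hR₁ : Continuous R₁) (hR₂ : Continuous R₂) (hR₃ : Continuous R₃) (hR₄ : Continuous R₄) :
    (∀ t ∈ Icc t₁ t₂, R₁ t = 0 ∧ R₂ t = 0 ∧ R₃ t = 0 ∧ R₄ t = 0) ↔
      ∀ (δ₁ : ℝ → Fin a → ℝ) (δ₂ : ℝ → Fin b → ℝ) (δ₃ : ℝ → Fin c → ℝ) (δ₄ : ℝ → Fin d → ℝ),
        ContDiff ℝ 1 δ₁ → ContDiff ℝ 1 δ₂ → ContDiff ℝ 1 δ₃ → ContDiff ℝ 1 δ₄ →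
        δ₁ t₁ = 0 → δ₁ t₂ = 0 →
        ∫ t in t₁..t₂, (dot (R₁ t) (δ₁ t) + dot (R₂ t) (δ₂ t) + dot (R₃ t) (δ₃ t) +
          dot (R₄ t) (δ₄ t)) = 0 := by
  constructor
  · intro hR δ₁ δ₂ δ₃ δ₄ _ _ _ _ _ _
    rw [intervalIntegral.integral_congr (g := fun _ => 0), intervalIntegral.integral_zero]
    intro t ht'
    rw [uIcc_of_le ht.le] at ht'
    obtain ⟨h₁, h₂, h₃, h₄⟩ := hR t ht'
    simp [h₁, h₂, h₃, h₄, dot_eq_dotProduct]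
  · intro h t ht'
    have c₀ {k : ℕ} : ContDiff ℝ 1 (0 : ℝ → Fin k → ℝ) := contDiff_const
    refine ⟨eqOn_zero_of_forall_integral_dot_eq_zero ht hR₁ (fun φ hφ h₁ h₂ => ?_) ht',
      eqOn_zero_of_forall_integral_dot_eq_zero ht hR₂ (fun φ hφ _ _ => ?_) ht',
      eqOn_zero_of_forall_integral_dot_eq_zero ht hR₃ (fun φ hφ _ _ => ?_) ht',
      eqOn_zero_of_forall_integral_dot_eq_zero ht hR₄ (fun φ hφ _ _ => ?_) ht'⟩
    · simpa [dot_eq_dotProduct] using h φ 0 0 0 hφ c₀ c₀ c₀ h₁ h₂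
    · simpa [dot_eq_dotProduct] using h 0 φ 0 0 c₀ hφ c₀ c₀ rfl rfl
    · simpa [dot_eq_dotProduct] using h 0 0 φ 0 c₀ c₀ hφ c₀ rfl rfl
    · simpa [dot_eq_dotProduct] using h 0 0 0 φ c₀ c₀ c₀ hφ rfl rfl

theorem continuous_of_forall_clm_apply_eq_dot {X : Type*} [TopologicalSpace X] {k : ℕ}
    {g : X → Fin k → ℝ} {L : X → (Fin k → ℝ) →L[ℝ] ℝ} (hL : Continuous L)
    (h : ∀ x y, L x y = dot (g x) y) : Continuous g :=
  continuous_pi fun i => by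
    simpa [h, dot_eq_dotProduct] using hL.clm_apply (continuous_const (y := Pi.single i 1))

section Vakonomic

variable {n m : ℕ} {𝔏 : (Fin n → ℝ) × (Fin n → ℝ) × (Fin m → ℝ) → ℝ}

theorem continuous_partialGradients (h𝔏 : ContDiff ℝ 1 𝔏)
    {Gq Gv : (Fin n → ℝ) × (Fin n → ℝ) × (Fin m → ℝ) → Fin n → ℝ}
    {Gl : (Fin n → ℝ) × (Fin n → ℝ) × (Fin m → ℝ) → Fin m → ℝ}
    (hfd : ∀ x y, fderiv ℝ 𝔏 x y = dot (Gq x) y.1 + dot (Gv x) y.2.1 + dot (Gl x) y.2.2) :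
    Continuous Gq ∧ Continuous Gv ∧ Continuous Gl := by
  have hD := h𝔏.continuous_fderiv one_ne_zero
  refine ⟨continuous_of_forall_clm_apply_eq_dot
      (hD.clm_comp (continuous_const (y := ContinuousLinearMap.inl ℝ _ _))) fun x y => ?_,
    continuous_of_forall_clm_apply_eq_dot (hD.clm_comp (continuous_const (y :=
      (ContinuousLinearMap.inr ℝ _ _).comp (ContinuousLinearMap.inl ℝ _ _)))) fun x y => ?_,
    continuous_of_forall_clm_apply_eq_dot (hD.clm_comp (continuous_const (y :=
      (ContinuousLinearMap.inr ℝ _ _).comp (ContinuousLinearMap.inr ℝ _ _)))) fun x y => ?_⟩ <;>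
  simp [hfd, dot_eq_dotProduct]

theorem hasDerivAt_hamiltonPontryaginAction (h𝔏 : ContDiff ℝ 1 𝔏) (t₁ t₂ : ℝ)
    {q v p δq δv δp : ℝ → Fin n → ℝ} {l δl : ℝ → Fin m → ℝ}
    (hq : ContDiff ℝ 1 q) (hv : Continuous v) (hp : Continuous p) (hl : Continuous l)
    (hδq : ContDiff ℝ 1 δq) (hδv : Continuous δv) (hδp : Continuous δp) (hδl : Continuous δl) :
    HasDerivAt (fun s : ℝ => ∫ t in t₁..t₂,
        (𝔏 (q t + s • δq t, v t + s • δv t, l t + s • δl t) +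
          dot (p t + s • δp t) (deriv q t + s • deriv δq t - v t - s • δv t)))
      (∫ t in t₁..t₂, (fderiv ℝ 𝔏 (q t, v t, l t) (δq t, δv t, δl t) +
        dot (δp t) (deriv q t - v t) + dot (p t) (deriv δq t - δv t))) 0 := by
  refine (hasDerivAt_intervalIntegral_of_continuous_deriv
    (F := fun s t => 𝔏 (q t + s • δq t, v t + s • δv t, l t + s • δl t) +
      dot (p t + s • δp t) (deriv q t + s • deriv δq t - v t - s • δv t))
    (F' := fun s t => fderiv ℝ 𝔏 (q t + s • δq t, v t + s • δv t, l t + s • δl t)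
      (δq t, δv t, δl t) + (dot (δp t) (deriv q t + s • deriv δq t - v t - s • δv t) +
        dot (p t + s • δp t) (deriv δq t - δv t))) (fun s => by fun_prop) (by fun_prop)
    (fun s t => ?_)).congr_deriv (by simp [add_assoc])
  have hline {k : ℕ} (x δx : Fin k → ℝ) : HasDerivAt (fun s : ℝ => x + s • δx) δx s := by
    simpa using ((hasDerivAt_id s).smul_const δx).const_add x
  exact ((h𝔏.differentiable one_ne_zero _).hasFDerivAt.comp_hasDerivAt s
    ((hline _ _).prodMk ((hline _ _).prodMk (hline _ _)))).add
    ((hline _ _).dot (by simpa using ((hline _ _).sub_const (v t)).fun_sub (hline 0 (δv t))))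

theorem integral_firstVariation_eq_integral_residuals
    {Gq Gv : (Fin n → ℝ) × (Fin n → ℝ) × (Fin m → ℝ) → Fin n → ℝ}
    {Gl : (Fin n → ℝ) × (Fin n → ℝ) × (Fin m → ℝ) → Fin m → ℝ}
    (hfd : ∀ x y, fderiv ℝ 𝔏 x y = dot (Gq x) y.1 + dot (Gv x) y.2.1 + dot (Gl x) y.2.2)
    (hGq : Continuous Gq) (hGv : Continuous Gv) (hGl : Continuous Gl) {t₁ t₂ : ℝ}
    {q v p δq δv δp : ℝ → Fin n → ℝ} {l δl : ℝ → Fin m → ℝ}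
    (hq : ContDiff ℝ 1 q) (hv : Continuous v) (hp : ContDiff ℝ 1 p) (hl : Continuous l)
    (hδq : ContDiff ℝ 1 δq) (hδv : Continuous δv) (hδp : Continuous δp) (hδl : Continuous δl)
    (h₁ : δq t₁ = 0) (h₂ : δq t₂ = 0) :
    ∫ t in t₁..t₂, (fderiv ℝ 𝔏 (q t, v t, l t) (δq t, δv t, δl t) +
        dot (δp t) (deriv q t - v t) + dot (p t) (deriv δq t - δv t)) =
      ∫ t in t₁..t₂, (dot (Gq (q t, v t, l t) - deriv p t) (δq t) +
        dot (Gv (q t, v t, l t) - p t) (δv t) + dot (deriv q t - v t) (δp t) +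
        dot (Gl (q t, v t, l t)) (δl t)) := by
  have hdot_deriv : ∀ t, HasDerivAt (fun t => dot (p t) (δq t))
      (dot (deriv p t) (δq t) + dot (p t) (deriv δq t)) t := fun t =>
    (hp.differentiable one_ne_zero t).hasDerivAt.dot (hδq.differentiable one_ne_zero t).hasDerivAt
  rw [intervalIntegral.integral_congr (g := fun t =>
      (dot (Gq (q t, v t, l t) - deriv p t) (δq t) + dot (Gv (q t, v t, l t) - p t) (δv t) +
        dot (deriv q t - v t) (δp t) + dot (Gl (q t, v t, l t)) (δl t)) +
      (dot (deriv p t) (δq t) + dot (p t) (deriv δq t))) fun t _ => ?_,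
    intervalIntegral.integral_add (Continuous.intervalIntegrable (by fun_prop) _ _)
      (Continuous.intervalIntegrable (by fun_prop) _ _),
    intervalIntegral.integral_eq_sub_of_hasDerivAt (fun t _ => hdot_deriv t)
      (Continuous.intervalIntegrable (by fun_prop) _ _), h₁, h₂]
  · simp [dot_eq_dotProduct]
  · simp only [hfd, dot_eq_dotProduct, dotProduct_sub, sub_dotProduct, dotProduct_comm (δp t)]
    ring

end Vakonomic

/-- the Hamilton-Pontryagin principle for a vakonomic Lagrangian
`𝔏(q,v,λ)`.  A `C¹` curve `(q,v,p,λ)` satisfies the implicit vakonomic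
Euler-Lagrange equations on `[t₁,t₂]` iff the Hamilton-Pontryagin action is
stationary at `s = 0` for every `C¹` variation `(δq,δv,δp,δλ)` with
`δq(t₁) = δq(t₂) = 0`.  Here `Gq, Gv, Gl` are the vectors representing the
partial Fréchet derivatives `∂𝔏/∂q, ∂𝔏/∂v, ∂𝔏/∂λ`. -/
theorem hamilton_pontryagin_vakonomic {n m : ℕ}
    (𝔏 : (Fin n → ℝ) × (Fin n → ℝ) × (Fin m → ℝ) → ℝ)
    (Gq Gv : (Fin n → ℝ) × (Fin n → ℝ) × (Fin m → ℝ) → Fin n → ℝ)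
    (Gl : (Fin n → ℝ) × (Fin n → ℝ) × (Fin m → ℝ) → Fin m → ℝ)
    (h𝔏 : ContDiff ℝ 1 𝔏)
    (hG : ∀ x : (Fin n → ℝ) × (Fin n → ℝ) × (Fin m → ℝ),
      ∃ f : ((Fin n → ℝ) × (Fin n → ℝ) × (Fin m → ℝ)) →L[ℝ] ℝ,
        HasFDerivAt 𝔏 f x ∧
        ∀ y : (Fin n → ℝ) × (Fin n → ℝ) × (Fin m → ℝ),
          f y = dot (Gq x) y.1 + dot (Gv x) y.2.1 + dot (Gl x) y.2.2)
    (t₁ t₂ : ℝ) (ht : t₁ < t₂)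
    (q v p : ℝ → Fin n → ℝ) (l : ℝ → Fin m → ℝ)
    (hq : ContDiff ℝ 1 q) (hv : ContDiff ℝ 1 v) (hp : ContDiff ℝ 1 p)
    (hl : ContDiff ℝ 1 l) :
    (∀ t ∈ Set.Icc t₁ t₂,
        p t = Gv (q t, v t, l t) ∧
        deriv q t = v t ∧
        deriv p t = Gq (q t, v t, l t) ∧
        Gl (q t, v t, l t) = 0)
    ↔
    (∀ (δq δv δp : ℝ → Fin n → ℝ) (δl : ℝ → Fin m → ℝ),
      ContDiff ℝ 1 δq → ContDiff ℝ 1 δv → ContDiff ℝ 1 δp → ContDiff ℝ 1 δl →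
      δq t₁ = 0 → δq t₂ = 0 →
      HasDerivAt (fun s : ℝ => ∫ t in t₁..t₂,
        (𝔏 (q t + s • δq t, v t + s • δv t, l t + s • δl t) +
          dot (p t + s • δp t)
            (deriv q t + s • deriv δq t - v t - s • δv t)))
        0 0) := by
  have hfd : ∀ x y, fderiv ℝ 𝔏 x y = dot (Gq x) y.1 + dot (Gv x) y.2.1 + dot (Gl x) y.2.2 :=
    fun x y => by
      obtain ⟨f, hf, hfy⟩ := hG x
      rw [hf.fderiv, hfy]
  obtain ⟨hGq, hGv, hGl⟩ := continuous_partialGradients h𝔏 hfd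
  calc _ ↔ ∀ t ∈ Icc t₁ t₂, Gq (q t, v t, l t) - deriv p t = 0 ∧ Gv (q t, v t, l t) - p t = 0 ∧
          deriv q t - v t = 0 ∧ Gl (q t, v t, l t) = 0 :=
        forall₂_congr fun t _ => by simp only [sub_eq_zero]; tauto
    _ ↔ _ := forall_eq_zero_iff_forall_integral_dot_eq_zero ht (by fun_prop) (by fun_prop)
        (by fun_prop) (by fun_prop)
    _ ↔ _ := forall₄_congr fun δq δv δp δl => forall₄_congr fun hδq hδv hδp hδl =>
        forall₂_congr fun h₁ h₂ => by
          have hD := hasDerivAt_hamiltonPontryaginAction h𝔏 t₁ t₂ hq hv.continuous hp.continuous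
            hl.continuous hδq hδv.continuous hδp.continuous hδl.continuous
          rw [integral_firstVariation_eq_integral_residuals hfd hGq hGv hGl hq hv.continuous hp
            hl.continuous hδq hδv.continuous hδp.continuous hδl.continuous h₁ h₂] at hD
          exact ⟨fun h => h ▸ hD, hD.unique⟩
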